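/- Let k be an integer with k > 1, let b₁ ∈ Ab, let l, t ∈ ℤ[1/k], and let z ∈ ℤ. Then l·z = t in ℤ[1/k] if and only if for every integer n there exists u ∈ A such that [b₁^{n}, (t,0)] = [b₁^{n·z}, (l,0)]·[b₁^{n}, [u, b₁^{n}]] in G = ℤ[1/k] ⋊ ℤ, where [x, y] = x⁻¹y⁻¹xy. -/

import Mathlib

/-- The subring `ℤ[1/k] = {z·k^i : z, i ∈ ℤ}` of `ℚ`, as a set. -/
def zkSet (k : ℤ) : Set ℚ := {q | ∃ z i : ℤ, q = (z : ℚ) * (k : ℚ) ^ i}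

theorem zkSet_neg {k : ℤ} {q : ℚ} (hq : q ∈ zkSet k) : -q ∈ zkSet k := by
  obtain ⟨z, i, rfl⟩ := hq
  exact ⟨-z, i, by push_cast; ring⟩

theorem zkSet_mul_zpow {k : ℤ} (hk : (k : ℚ) ≠ 0) {q : ℚ} (hq : q ∈ zkSet k) (j : ℤ) :
    q * (k : ℚ) ^ j ∈ zkSet k := by
  obtain ⟨z, i, rfl⟩ := hq
  exact ⟨z, i + j, by rw [zpow_add₀ hk]; ring⟩

theorem zkSet_add {k : ℤ} (hk : (k : ℚ) ≠ 0) {p q : ℚ}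
    (hp : p ∈ zkSet k) (hq : q ∈ zkSet k) : p + q ∈ zkSet k := by
  obtain ⟨z₁, i₁, rfl⟩ := hp
  obtain ⟨z₂, i₂, rfl⟩ := hq
  rcases le_total i₁ i₂ with h | h
  · refine ⟨z₁ + z₂ * k ^ (i₂ - i₁).toNat, i₁, ?_⟩
    have hpow : ((k : ℚ)) ^ ((i₂ - i₁).toNat) = (k : ℚ) ^ (i₂ - i₁) := by
      rw [← zpow_natCast, Int.toNat_of_nonneg (by omega)]
    push_cast
    rw [hpow]
    have e : (k : ℚ) ^ (i₂ - i₁) * (k : ℚ) ^ i₁ = (k : ℚ) ^ i₂ := by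
      rw [← zpow_add₀ hk, show i₂ - i₁ + i₁ = i₂ from by omega]
    linear_combination (-(z₂ : ℚ)) * e
  · refine ⟨z₂ + z₁ * k ^ (i₁ - i₂).toNat, i₂, ?_⟩
    have hpow : ((k : ℚ)) ^ ((i₁ - i₂).toNat) = (k : ℚ) ^ (i₁ - i₂) := by
      rw [← zpow_natCast, Int.toNat_of_nonneg (by omega)]
    push_cast
    rw [hpow]
    have e : (k : ℚ) ^ (i₁ - i₂) * (k : ℚ) ^ i₂ = (k : ℚ) ^ i₁ := by
      rw [← zpow_add₀ hk, show i₁ - i₂ + i₂ = i₁ from by omega]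
    linear_combination (-(z₁ : ℚ)) * e

/-- The underlying set of the semidirect product `G = ℤ[1/k] ⋊ ℤ` (modelled inside
`ℚ × ℤ`): pairs `(y, m)` with multiplication `(y₁,m₁)(y₂,m₂) = (y₁ + y₂·k^{-m₁}, m₁+m₂)`. -/
@[ext]
structure BSQ (k : ℤ) : Type where
  y : ℚ
  m : ℤ

namespace BSQ

variable {k : ℤ}

instance : Mul (BSQ k) := ⟨fun g h => ⟨g.y + h.y * (k : ℚ) ^ (-g.m), g.m + h.m⟩⟩
instance : One (BSQ k) := ⟨⟨0, 0⟩⟩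
instance : Inv (BSQ k) := ⟨fun g => ⟨-g.y * (k : ℚ) ^ g.m, -g.m⟩⟩

@[simp] theorem mul_y (g h : BSQ k) : (g * h).y = g.y + h.y * (k : ℚ) ^ (-g.m) := rfl
@[simp] theorem mul_m (g h : BSQ k) : (g * h).m = g.m + h.m := rfl
@[simp] theorem one_y : (1 : BSQ k).y = 0 := rfl
@[simp] theorem one_m : (1 : BSQ k).m = 0 := rfl
@[simp] theorem inv_y (g : BSQ k) : g⁻¹.y = -g.y * (k : ℚ) ^ g.m := rfl
@[simp] theorem inv_m (g : BSQ k) : g⁻¹.m = -g.m := rfl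

theorem kq_ne_zero [Fact (1 < k)] : (k : ℚ) ≠ 0 := by
  have h : (1 : ℤ) < k := Fact.out
  have h' : (k : ℤ) ≠ 0 := by omega
  exact_mod_cast h'

private theorem mul_assoc' [Fact (1 < k)] (a b c : BSQ k) : a * b * c = a * (b * c) := by
  ext
  · simp only [mul_y, mul_m, neg_add, zpow_add₀ (kq_ne_zero (k := k))]
    ring
  · simp only [mul_m]
    ring

private theorem one_mul' [Fact (1 < k)] (a : BSQ k) : 1 * a = a := by
  ext <;> simp

private theorem mul_one' [Fact (1 < k)] (a : BSQ k) : a * 1 = a := by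
  ext <;> simp

private theorem inv_mul_cancel' [Fact (1 < k)] (a : BSQ k) : a⁻¹ * a = 1 := by
  ext
  · simp only [mul_y, inv_y, inv_m, one_y, neg_neg]
    ring
  · simp only [mul_m, inv_m, one_m]
    ring

/-- The group structure on `ℤ[1/k] ⋊ ℤ` (here on the ambient `ℚ ⋊ ℤ`). -/
instance [Fact (1 < k)] : Group (BSQ k) where
  mul := (· * ·)
  one := 1
  inv := Inv.inv
  mul_assoc := mul_assoc'
  one_mul := one_mul'
  mul_one := mul_one'
  inv_mul_cancel := inv_mul_cancel'

end BSQ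

/-- The group `G = ℤ[1/k] ⋊ ℤ`, as the subgroup of `ℚ ⋊ ℤ` of pairs whose first
coordinate lies in `ℤ[1/k]`. -/
def bsSubgroup (k : ℤ) [Fact (1 < k)] : Subgroup (BSQ k) where
  carrier := {g | g.y ∈ zkSet k}
  one_mem' := ⟨0, 0, by norm_num⟩
  mul_mem' := by
    intro a b ha hb
    exact zkSet_add BSQ.kq_ne_zero ha (zkSet_mul_zpow BSQ.kq_ne_zero hb _)
  inv_mem' := by
    intro a ha
    exact zkSet_mul_zpow BSQ.kq_ne_zero (zkSet_neg ha) _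

theorem mem_bsSubgroup {k : ℤ} [Fact (1 < k)] {g : BSQ k} (h : g.y ∈ zkSet k) :
    g ∈ bsSubgroup k := h

/-- The set `A = {(y,0) : y ∈ ℤ[1/k]}`. -/
def aSet (k : ℤ) : Set (BSQ k) := {g | g.y ∈ zkSet k ∧ g.m = 0}

/-- The set `Ab = {(y,1) : y ∈ ℤ[1/k]}`. -/
def abSet (k : ℤ) : Set (BSQ k) := {g | g.y ∈ zkSet k ∧ g.m = 1}

/-- The commutator `[x, y] = x⁻¹ y⁻¹ x y` (the paper's convention). -/
def gcomm {k : ℤ} [Fact (1 < k)] (x y : BSQ k) : BSQ k := x⁻¹ * y⁻¹ * x * y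

/-! Commutators of `g` with elements `(s, 0)` of `A` are `(s(1 - k^{g.m}), 0)`, so the
condition for `n` reads `t(1 - k^n) = l(1 - k^{nz}) - u(1 - k^n)²` for some `u ∈ ℤ[1/k]`.
Since `(k^n - 1)²` divides `k^{nz} - 1 - z(k^n - 1)` in `ℤ[1/k]`, for `n ≠ 0` this says exactly
that `k^n - 1` divides `lz - t` in `ℤ[1/k]`. Writing `lz - t = a / k^e` with `a ∈ ℤ`, the
integers `k^n - 1` are coprime to `k`, so they all divide `a`, which forces `a = 0`. -/

theorem exists_mem_sq_mul_eq_zpow_sub_one_sub {K : Type*} [Field K] (S : Subring K) {x : K}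
    (hx₀ : x ≠ 0) (hx : x ∈ S) (hx' : x⁻¹ ∈ S) (z : ℤ) :
    ∃ c ∈ S, x ^ z - 1 - z * (x - 1) = (x - 1) ^ 2 * c := by
  induction z using Int.induction_on with
  | zero => exact ⟨0, zero_mem _, by simp⟩
  | succ z ih =>
    obtain ⟨c, hc, h⟩ := ih
    refine ⟨x * c + z, add_mem (mul_mem hx hc) (natCast_mem S z), ?_⟩
    rw [zpow_add_one₀ hx₀]
    push_cast at h ⊢
    linear_combination x * h
  | pred z ih =>
    obtain ⟨c, hc, h⟩ := ih
    refine ⟨x⁻¹ * (c + 1 + z),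
      mul_mem hx' (add_mem (add_mem hc (one_mem _)) (natCast_mem S z)), ?_⟩
    rw [zpow_sub_one₀ hx₀]
    push_cast at h ⊢
    linear_combination x⁻¹ * h + (1 - (z + 1) * (x - 1)) * mul_inv_cancel₀ hx₀

def zkSubring (k : ℤ) [Fact (1 < k)] : Subring ℚ where
  carrier := zkSet k
  mul_mem' := by
    rintro _ _ ⟨z₁, i₁, rfl⟩ ⟨z₂, i₂, rfl⟩
    exact ⟨z₁ * z₂, i₁ + i₂, by push_cast; rw [zpow_add₀ BSQ.kq_ne_zero]; ring⟩
  one_mem' := ⟨1, 0, by simp⟩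
  add_mem' := zkSet_add BSQ.kq_ne_zero
  zero_mem' := ⟨0, 0, by simp⟩
  neg_mem' := zkSet_neg

theorem zpow_mem_zkSubring {k : ℤ} [Fact (1 < k)] (n : ℤ) : (k : ℚ) ^ n ∈ zkSubring k :=
  ⟨1, n, by simp⟩

theorem exists_mul_pow_eq_intCast {k : ℤ} (hk : (k : ℚ) ≠ 0) {q : ℚ} (hq : q ∈ zkSet k) :
    ∃ (a : ℤ) (e : ℕ), q * (k : ℚ) ^ e = a := by
  obtain ⟨z, i, rfl⟩ := hq
  have hi : ((i + (-i).toNat).toNat : ℤ) = i + (-i).toNat := Int.toNat_of_nonneg (by omega)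
  refine ⟨z * k ^ (i + (-i).toNat).toNat, (-i).toNat, ?_⟩
  push_cast
  rw [mul_assoc, ← zpow_natCast, ← zpow_natCast, hi, zpow_add₀ hk]

theorem dvd_of_intCast_eq_mul {k a d : ℤ} (hk : (k : ℚ) ≠ 0) (hd : IsCoprime d k) {c : ℚ}
    (hc : c ∈ zkSet k) (h : (a : ℚ) = c * d) : d ∣ a := by
  obtain ⟨b, f, hb⟩ := exists_mul_pow_eq_intCast hk hc
  have hab : a * k ^ f = b * d := by
    exact_mod_cast (show (a : ℚ) * k ^ f = b * d by rw [h, ← hb]; ring)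
  exact (hd.pow_right (n := f)).dvd_of_dvd_mul_right ⟨b, by rw [hab, mul_comm]⟩

theorem eq_zero_of_forall_mem_mul_pow_sub_one {k : ℤ} [Fact (1 < k)] {r : ℚ}
    (h : ∀ n : ℕ, 0 < n → ∃ c ∈ zkSubring k, r = c * ((k : ℚ) ^ n - 1)) : r = 0 := by
  have hk : 1 < k := Fact.out
  have hr : r ∈ zkSubring k := by
    obtain ⟨c, hc, rfl⟩ := h 1 one_pos
    exact mul_mem hc (sub_mem (pow_mem (intCast_mem _ k) 1) (one_mem _))
  obtain ⟨a, e, hae⟩ := exists_mul_pow_eq_intCast BSQ.kq_ne_zero hr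
  have hdvd : ∀ n : ℕ, 0 < n → k ^ n - 1 ∣ a := fun n hn => by
    obtain ⟨c, hc, hrc⟩ := h n hn
    have hcop : IsCoprime (k ^ n - 1) k := .sub_one_left_of_dvd (dvd_pow_self k hn.ne')
    refine dvd_of_intCast_eq_mul BSQ.kq_ne_zero hcop
      (mul_mem hc (pow_mem (intCast_mem _ k) e) : c * (k : ℚ) ^ e ∈ zkSubring k) ?_
    rw [← hae, hrc]; push_cast; ring
  obtain ⟨n, hn⟩ := pow_unbounded_of_one_lt (|a| + 1) hk
  have hn0 : 0 < n := 
    Nat.pos_of_ne_zero (by rintro rfl; rw [pow_zero] at hn; linarith [abs_nonneg a])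
  have ha : a = 0 := Int.eq_zero_of_abs_lt_dvd (hdvd n hn0) (by linarith)
  exact (mul_eq_zero.1 (by simpa [ha] using hae)).resolve_right (pow_ne_zero _ BSQ.kq_ne_zero)

namespace BSQ

variable {k : ℤ}

theorem mk_zero_inv (s : ℚ) : (⟨s, 0⟩ : BSQ k)⁻¹ = ⟨-s, 0⟩ := by
  ext <;> simp

theorem mk_zero_mul_mk_zero (s s' : ℚ) :
    (⟨s, 0⟩ : BSQ k) * ⟨s', 0⟩ = ⟨s + s', 0⟩ := by
  ext <;> simp

variable [Fact (1 < k)]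

theorem m_zpow (g : BSQ k) (n : ℤ) : (g ^ n).m = n * g.m := by
  induction n using Int.induction_on with
  | zero => simp
  | succ n ih => rw [zpow_add_one, mul_m, ih]; ring
  | pred n ih => rw [zpow_sub_one, mul_m, inv_m, ih]; ring

theorem gcomm_mk_zero (g : BSQ k) (s : ℚ) :
    gcomm g ⟨s, 0⟩ = ⟨s * (1 - (k : ℚ) ^ g.m), 0⟩ := by
  have hk := zpow_ne_zero g.m (kq_ne_zero (k := k))
  ext
  · simp only [gcomm, mul_y, inv_y, neg_mul, zpow_ofNat, pow_zero, mul_one, inv_m, neg_neg, mul_m,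
      neg_zero, add_zero, neg_add_cancel_comm, neg_add_cancel]
    field_simp
    ring
  · simp [gcomm]

theorem gcomm_swap (x y : BSQ k) : gcomm x y = (gcomm y x)⁻¹ := by
  simp [gcomm, mul_assoc]

theorem gcomm_eq_gcomm_mul_gcomm_gcomm_iff (g h : BSQ k) (s t l : ℚ) :
    gcomm g ⟨t, 0⟩ = gcomm h ⟨l, 0⟩ * gcomm g (gcomm ⟨s, 0⟩ g) ↔
      t * (1 - (k : ℚ) ^ g.m) = l * (1 - (k : ℚ) ^ h.m) - s * (1 - (k : ℚ) ^ g.m) ^ 2 := by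
  simp only [gcomm_swap ⟨s, 0⟩ g, gcomm_mk_zero, mk_zero_inv, mk_zero_mul_mk_zero, mk.injEq,
    and_true]
  constructor <;> intro h <;> linear_combination h

end BSQ

theorem exists_mem_aSet_gcomm_eq_iff {k : ℤ} [Fact (1 < k)] {b : BSQ k} (hb : b.m = 1) {l : ℚ}
    (hl : l ∈ zkSubring k) (t : ℚ) (z n : ℤ) :
    (∃ u ∈ aSet k, gcomm (b ^ n) ⟨t, 0⟩ =
        gcomm (b ^ (n * z)) ⟨l, 0⟩ * gcomm (b ^ n) (gcomm u (b ^ n))) ↔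
      ∃ c ∈ zkSubring k, (l * z - t) * ((k : ℚ) ^ n - 1) = c * ((k : ℚ) ^ n - 1) ^ 2 := by
  obtain ⟨S, hS, hSeq⟩ := exists_mem_sq_mul_eq_zpow_sub_one_sub (zkSubring k)
    (zpow_ne_zero n BSQ.kq_ne_zero) (zpow_mem_zkSubring n)
    (by simpa [← zpow_neg] using zpow_mem_zkSubring (k := k) (-n)) z
  rw [← zpow_mul] at hSeq
  constructor
  · rintro ⟨⟨s, m⟩, ⟨hs, hm : m = 0⟩, h⟩
    subst hm
    rw [BSQ.gcomm_eq_gcomm_mul_gcomm_gcomm_iff, BSQ.m_zpow, BSQ.m_zpow, hb, mul_one, mul_one] at h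
    refine ⟨-(s + l * S), neg_mem (add_mem hs (mul_mem hl hS)), ?_⟩
    linear_combination h - l * hSeq
  · rintro ⟨c, hc, h⟩
    refine ⟨⟨-(c + l * S), 0⟩, ⟨neg_mem (add_mem hc (mul_mem hl hS)), rfl⟩, ?_⟩
    rw [BSQ.gcomm_eq_gcomm_mul_gcomm_gcomm_iff, BSQ.m_zpow, BSQ.m_zpow, hb, mul_one, mul_one]
    linear_combination h + l * hSeq

theorem mul_int_eq_iff_commutator_condition_general (k : ℤ) [Fact (1 < k)] (b₁ : BSQ k)
    (hb : b₁ ∈ abSet k) (l t : ℚ) (hl : l ∈ zkSet k) (z : ℤ) :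
    l * (z : ℚ) = t ↔
      ∀ n : ℤ, ∃ u ∈ aSet k,
        gcomm (b₁ ^ n) (⟨t, 0⟩ : BSQ k) =
          gcomm (b₁ ^ (n * z)) (⟨l, 0⟩ : BSQ k) *
            gcomm (b₁ ^ n) (gcomm u (b₁ ^ n)) := by
  simp only [exists_mem_aSet_gcomm_eq_iff hb.2 hl]
  constructor
  · intro h n
    exact ⟨0, zero_mem _, by rw [h]; ring⟩
  · intro H
    refine sub_eq_zero.1 (eq_zero_of_forall_mem_mul_pow_sub_one (k := k) fun n hn => ?_)
    obtain ⟨c, hc, h⟩ := H n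
    rw [zpow_natCast] at h
    have hk : (1 : ℚ) < k := by exact_mod_cast (Fact.out : (1 : ℤ) < k)
    have hD : (k : ℚ) ^ n - 1 ≠ 0 := sub_ne_zero.2 (one_lt_pow₀ hk hn.ne').ne'
    exact ⟨c, hc, mul_right_cancel₀ hD (by linear_combination h)⟩

/-- **Lemma 9 (definability of multiplication by an integer).** For `b₁ ∈ Ab`,
`l, t ∈ ℤ[1/k]` and `z ∈ ℤ`: `l·z = t` iff for every integer `n` there exists
`u ∈ A` with `[b₁^n, (t,0)] = [b₁^{n·z}, (l,0)]·[b₁^n, [u, b₁^n]]` in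
`G = ℤ[1/k] ⋊ ℤ`. -/
theorem mul_int_eq_iff_commutator_condition (k : ℤ) [Fact (1 < k)] (b₁ : BSQ k)
    (hb : b₁ ∈ abSet k) (l t : ℚ) (hl : l ∈ zkSet k) (ht : t ∈ zkSet k) (z : ℤ) :
    l * (z : ℚ) = t ↔
      ∀ n : ℤ, ∃ u ∈ aSet k,
        gcomm (b₁ ^ n) (⟨t, 0⟩ : BSQ k) =
          gcomm (b₁ ^ (n * z)) (⟨l, 0⟩ : BSQ k) *
            gcomm (b₁ ^ n) (gcomm u (b₁ ^ n)) :=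
  mul_int_eq_iff_commutator_condition_general k b₁ hb l t hl z
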